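/- Let F(θ) = (1/2)(1 − (1−2θ)/√(θ² + (1−θ)²)). Then the failure probability under F equals 1/2; i.e., ∫₀¹ θ · f(θ) dθ = 1/2 where f(θ) = (1/2)(θ² + (1−θ)²)^{−3/2}, equivalently 1 − ∫₀¹ F(t) dt = 1/2. -/

import Mathlib

open MeasureTheory Set

/-- The equilibrium cdf of the endogenous test-selection game on `[0,1]`. -/
noncomputable def Feq (θ : ℝ) : ℝ :=
  (1/2) * (1 - (1 - 2*θ) / Real.sqrt (θ^2 + (1-θ)^2))

/-- The equilibrium density `f(θ) = (1/2)(θ² + (1-θ)²)^{-3/2}`. -/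
noncomputable def feq (θ : ℝ) : ℝ := 1 / (2 * Real.sqrt (θ^2 + (1-θ)^2) ^ 3)

/-! `F` is an antiderivative of `f` with `F(1) = 1`, and it is point-symmetric about
`(1/2, 1/2)`: `F(1 - t) = 1 - F(t)`. Symmetry gives `∫₀¹ F = 1/2`, and integration by parts gives
`∫₀¹ θ f(θ) dθ = F(1) - ∫₀¹ F = 1/2`. -/

theorem intervalIntegral.integral_eq_of_pointSymmetric {g : ℝ → ℝ} {a b c : ℝ}
    (hg : IntervalIntegrable g volume a b) (hsymm : ∀ x, g (a + b - x) = c - g x) :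
    ∫ x in a..b, g x = (b - a) * c / 2 := by
  have hreflect : ∫ x in a..b, g (a + b - x) = ∫ x in a..b, g x := by
    rw [intervalIntegral.integral_comp_sub_left g (a + b)]
    ring_nf
  have hcompl : ∫ x in a..b, g (a + b - x) = (b - a) * c - ∫ x in a..b, g x := by
    simp only [hsymm]
    rw [intervalIntegral.integral_sub intervalIntegrable_const hg, intervalIntegral.integral_const,
      smul_eq_mul]
  linarith

lemma sq_add_one_sub_sq_pos (θ : ℝ) : 0 < θ^2 + (1-θ)^2 := by
  nlinarith [sq_nonneg (2*θ-1)]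

lemma sqrt_sq_add_one_sub_sq_pos (θ : ℝ) : 0 < Real.sqrt (θ^2 + (1-θ)^2) :=
  Real.sqrt_pos.mpr (sq_add_one_sub_sq_pos θ)

lemma hasDerivAt_Feq (θ : ℝ) : HasDerivAt Feq (feq θ) θ := by
  have hpos := sq_add_one_sub_sq_pos θ
  have hs := sqrt_sq_add_one_sub_sq_pos θ
  have hsq : Real.sqrt (θ^2 + (1-θ)^2) ^ 2 = θ^2 + (1-θ)^2 := Real.sq_sqrt hpos.le
  have hquad : HasDerivAt (fun x : ℝ => x^2 + (1-x)^2) (4*θ - 2) θ := by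
    refine (((hasDerivAt_id θ).pow 2).add (((hasDerivAt_id θ).const_sub 1).pow 2)).congr_deriv ?_
    simp only [id, Nat.cast_ofNat]
    ring
  have hnum : HasDerivAt (fun x : ℝ => 1 - 2*x) (-2) θ := by
    refine (((hasDerivAt_id θ).const_mul 2).const_sub 1).congr_deriv ?_
    ring
  refine (((hnum.div (hquad.sqrt hpos.ne') hs.ne').const_sub 1).const_mul (1/2 : ℝ)).congr_deriv ?_
  unfold feq
  field_simp
  linear_combination 4 * hsq

lemma continuous_feq : Continuous feq :=
  continuous_const.div (by fun_prop) fun θ => by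
    have := sqrt_sq_add_one_sub_sq_pos θ
    positivity

lemma continuous_Feq : Continuous Feq :=
  continuous_iff_continuousAt.mpr fun θ => (hasDerivAt_Feq θ).continuousAt

lemma Feq_one : Feq 1 = 1 := by
  norm_num [Feq]

lemma Feq_one_sub (t : ℝ) : Feq (1 - t) = 1 - Feq t := by
  have hs := (sqrt_sq_add_one_sub_sq_pos t).ne'
  unfold Feq
  rw [show (1-t)^2 + (1-(1-t))^2 = t^2 + (1-t)^2 by ring]
  field_simp
  ring

lemma integral_Feq : ∫ t in (0:ℝ)..1, Feq t = 1/2 := by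
  have h := intervalIntegral.integral_eq_of_pointSymmetric (c := 1)
    (continuous_Feq.intervalIntegrable 0 1) (fun t => by rw [zero_add, Feq_one_sub])
  linarith

lemma integral_mul_feq : ∫ θ in (0:ℝ)..1, θ * feq θ = 1 - ∫ t in (0:ℝ)..1, Feq t := by
  have h := intervalIntegral.integral_mul_deriv_eq_deriv_mul (a := 0) (b := 1)
    (fun θ _ => hasDerivAt_id θ) (fun θ _ => hasDerivAt_Feq θ)
    intervalIntegrable_const (continuous_feq.intervalIntegrable 0 1)
  simpa [Feq_one] using h

/-- The failure probability under the equilibrium distribution is `1/2`: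
`∫₀¹ θ f(θ) dθ = 1/2`, equivalently `1 - ∫₀¹ F = 1/2`. -/
theorem stmt_15 :
    (∫ θ in (0:ℝ)..1, θ * feq θ) = 1/2 ∧
    1 - (∫ t in (0:ℝ)..1, Feq t) = 1/2 := by
  rw [integral_mul_feq, integral_Feq]
  norm_num
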